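/- (Ordering without returns: blocking dominates reflection.) In the no-returns setting with finitely many events in each bounded interval, define M^∞(t) = M₀ + D(t) − Σ_{j: a_j ≤ t} b_j where D is nondecreasing with D(0)=0 and continuous at every a_j, M₀ ≥ 0, and define the blocking process recursively by M^B(t) = M₀ + D(t) − Σ_{j: a_j ≤ t} b_j·𝟙{M^B(a_j−) ≥ b_j}, and the reflected process M^{∞*} = φ[M^∞]. Then M^B(t) ≥ M^{∞*}(t) for all t ≥ 0. -/
import Mathlib


open Filter Set

/-- The Skorokhod map `φ[M](t) = M(t) − inf_{s ≤ t} min(0, M(s))`. -/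
noncomputable def skorokhod (M : ℝ → ℝ) (t : ℝ) : ℝ :=
  M t - sInf ((fun s => min 0 (M s)) '' Set.Icc 0 t)

/-- (Ordering without returns: blocking dominates reflection.) With
`M^∞(t) = M₀ + D(t) − Σ_{a_j ≤ t} b_j` and the blocking process
`M^B(t) = M₀ + D(t) − Σ_{a_j ≤ t} b_j·𝟙{M^B(a_j−) ≥ b_j}`, one has
`M^B(t) ≥ φ[M^∞](t)` for all `t ≥ 0`. -/
theorem blocking_dominates_reflection
    (M₀ : ℝ) (D : ℝ → ℝ) (a b : ℕ → ℝ) (Minf MB : ℝ → ℝ) (MBleft : ℕ → ℝ)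
    (hM₀ : 0 ≤ M₀)
    (hDmono : Monotone D) (hD0 : D 0 = 0)
    (hDright : ∀ t, ContinuousWithinAt D (Set.Ici t) t)
    (hDa : ∀ j, ContinuousAt D (a j))
    (ha : StrictMono a) (hapos : ∀ j, 0 < a j)
    (hainf : Tendsto a atTop atTop)
    (hb : ∀ j, 0 < b j)
    (hMinf : ∀ t, Minf t = M₀ + D t - ∑' j, if a j ≤ t then b j else 0)
    -- `MBleft j` is the left limit of the blocking process at arrival `a_j`
    (hMBleft : ∀ j, Tendsto MB (nhdsWithin (a j) (Set.Iio (a j))) (nhds (MBleft j)))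
    (hMB : ∀ t, MB t = M₀ + D t - ∑' j, if a j ≤ t ∧ b j ≤ MBleft j then b j else 0) :
    ∀ t, 0 ≤ t → skorokhod Minf t ≤ MB t := by
  -- finitely many arrivals before time t
  have hfin : ∀ t : ℝ, ∃ k, ∀ j, a j ≤ t → j < k := by
    intro t
    obtain ⟨k, hk⟩ := eventually_atTop.mp (hainf.eventually (eventually_gt_atTop t))
    refine ⟨k, fun j hj => ?_⟩
    by_contra h
    push_neg at h
    exact absurd hj (not_le.mpr (hk j h))
  have hMinf' : ∀ (t : ℝ) (k : ℕ), (∀ j, a j ≤ t → j < k) →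
      Minf t = M₀ + D t - ∑ j ∈ Finset.range k, (if a j ≤ t then b j else 0) := by
    intro t k hk
    rw [hMinf t, tsum_eq_sum (s := Finset.range k) ?_]
    intro j hj
    rw [if_neg]
    intro h
    exact hj (Finset.mem_range.mpr (hk j h))
  have hMB' : ∀ (t : ℝ) (k : ℕ), (∀ j, a j ≤ t → j < k) →
      MB t = M₀ + D t - ∑ j ∈ Finset.range k,
        (if a j ≤ t ∧ b j ≤ MBleft j then b j else 0) := by
    intro t k hk
    rw [hMB t, tsum_eq_sum (s := Finset.range k) ?_]
    intro j hj
    rw [if_neg]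
    intro h
    exact hj (Finset.mem_range.mpr (hk j h.1))
  -- Minf ≤ MB
  have hle : ∀ t : ℝ, Minf t ≤ MB t := by
    intro t
    obtain ⟨k, hk⟩ := hfin t
    rw [hMinf' t k hk, hMB' t k hk]
    have : ∑ j ∈ Finset.range k, (if a j ≤ t ∧ b j ≤ MBleft j then b j else 0)
        ≤ ∑ j ∈ Finset.range k, (if a j ≤ t then b j else 0) := by
      apply Finset.sum_le_sum
      intro j _
      by_cases h1 : a j ≤ t
      · by_cases h2 : b j ≤ MBleft j <;> simp [h1, h2, (hb j).le]
      · simp [h1]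
    linarith
  -- growth comparison
  have hgrow : ∀ s t : ℝ, s ≤ t → Minf t - Minf s ≤ MB t - MB s := by
    intro s t hst
    obtain ⟨k, hk⟩ := hfin t
    have hks : ∀ j, a j ≤ s → j < k := fun j hj => hk j (hj.trans hst)
    rw [hMinf' t k hk, hMinf' s k hks, hMB' t k hk, hMB' s k hks]
    have key : ∑ j ∈ Finset.range k,
        ((if a j ≤ t ∧ b j ≤ MBleft j then b j else 0)
          - (if a j ≤ s ∧ b j ≤ MBleft j then b j else 0))
        ≤ ∑ j ∈ Finset.range k,
        ((if a j ≤ t then b j else 0) - (if a j ≤ s then b j else 0)) := by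
      apply Finset.sum_le_sum
      intro j _
      by_cases h1 : a j ≤ s
      · have h2 : a j ≤ t := h1.trans hst
        by_cases h3 : b j ≤ MBleft j <;> simp [h1, h2, h3]
      · by_cases h2 : a j ≤ t
        · by_cases h3 : b j ≤ MBleft j <;> simp [h1, h2, h3, (hb j).le]
        · simp [h1, h2]
    rw [Finset.sum_sub_distrib, Finset.sum_sub_distrib] at key
    linarith
  -- MB is nonnegative
  have hMBnonneg : ∀ s : ℝ, 0 ≤ s → 0 ≤ MB s := by
    have main : ∀ k : ℕ, ∀ s : ℝ, 0 ≤ s → (∀ j, a j ≤ s → j < k) → 0 ≤ MB s := by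
      intro k
      induction k with
      | zero =>
        intro s hs hk
        rw [hMB' s 0 hk]
        have h1 := hDmono hs
        rw [hD0] at h1
        simp only [Finset.range_zero, Finset.sum_empty]
        linarith
      | succ k ih =>
        intro s hs hk
        by_cases hak : a k ≤ s
        · obtain ⟨c, hc0, hck, hcj⟩ : ∃ c, 0 ≤ c ∧ c < a k ∧ ∀ j, j < k → a j ≤ c := by
            cases k with
            | zero => exact ⟨0, le_refl 0, hapos 0, fun j hj => absurd hj (Nat.not_lt_zero j)⟩
            | succ m =>
              exact ⟨a m, (hapos m).le, ha (Nat.lt_succ_self m),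
                fun j hj => ha.monotone (Nat.lt_succ_iff.mp hj)⟩
          set S : ℝ := ∑ j ∈ Finset.range k, (if b j ≤ MBleft j then b j else 0) with hS
          have hMBt : ∀ u ∈ Set.Ioo c (a k), MB u = M₀ + D u - S := by
            intro u hu
            have hku : ∀ j, a j ≤ u → j < k :=
              fun j hj => ha.lt_iff_lt.mp (lt_of_le_of_lt hj hu.2)
            rw [hMB' u k hku]
            congr 1
            apply Finset.sum_congr rfl
            intro j hj
            have : a j ≤ u :=
              le_of_lt (lt_of_le_of_lt (hcj j (Finset.mem_range.mp hj)) hu.1)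
            simp [this]
          have hmem : Set.Ioo c (a k) ∈ nhdsWithin (a k) (Set.Iio (a k)) :=
            Ioo_mem_nhdsLT_of_mem ⟨hck, le_refl _⟩
          have hlim : Tendsto MB (nhdsWithin (a k) (Set.Iio (a k)))
              (nhds (M₀ + D (a k) - S)) := by
            have hD : Tendsto (fun u => M₀ + D u - S)
                (nhdsWithin (a k) (Set.Iio (a k))) (nhds (M₀ + D (a k) - S)) := by
              exact (tendsto_const_nhds.add
                ((hDa k).mono_left nhdsWithin_le_nhds)).sub tendsto_const_nhds
            apply hD.congr'
            filter_upwards [hmem] with u hu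
            exact (hMBt u hu).symm
          have hMBleft_eq : MBleft k = M₀ + D (a k) - S :=
            tendsto_nhds_unique (hMBleft k) hlim
          have hMBleft_nonneg : 0 ≤ MBleft k := by
            apply ge_of_tendsto (hMBleft k)
            filter_upwards [hmem] with u hu
            exact ih u (hc0.trans hu.1.le)
              (fun j hj => ha.lt_iff_lt.mp (lt_of_le_of_lt hj hu.2))
          rw [hMB' s (k + 1) hk]
          have hsum : ∑ j ∈ Finset.range (k + 1),
              (if a j ≤ s ∧ b j ≤ MBleft j then b j else 0)
              = S + (if b k ≤ MBleft k then b k else 0) := by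
            rw [Finset.sum_range_succ]
            congr 1
            · apply Finset.sum_congr rfl
              intro j hj
              have : a j ≤ s :=
                le_trans (le_trans (hcj j (Finset.mem_range.mp hj)) hck.le) hak
              simp [this]
            · simp [hak]
          rw [hsum]
          have hDs : D (a k) ≤ D s := hDmono hak
          by_cases hacc : b k ≤ MBleft k
          · rw [if_pos hacc]
            rw [hMBleft_eq] at hacc
            linarith
          · rw [if_neg hacc]
            rw [hMBleft_eq] at hMBleft_nonneg
            linarith
        · apply ih s hs
          intro j hj
          rcases Nat.lt_succ_iff_lt_or_eq.mp (hk j hj) with h | h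
          · exact h
          · exact absurd (h ▸ hj) hak
    intro s hs
    obtain ⟨k, hk⟩ := hfin s
    exact main k s hs hk
  -- assemble
  intro t ht
  have hne : ((fun s => min 0 (Minf s)) '' Set.Icc 0 t).Nonempty :=
    ⟨min 0 (Minf 0), 0, Set.left_mem_Icc.mpr ht, rfl⟩
  have hbound : ∀ x ∈ (fun s => min 0 (Minf s)) '' Set.Icc 0 t, Minf t - MB t ≤ x := by
    rintro x ⟨s, hs, rfl⟩
    apply le_min
    · linarith [hle t]
    · have h1 := hgrow s t hs.2
      have h2 := hMBnonneg s hs.1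
      linarith
  have hinf := le_csInf hne hbound
  unfold skorokhod
  linarith
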